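/- Let g be a positive integer and let τ be a symmetric g×g complex matrix whose imaginary part is positive definite. Then for all x, y ∈ ℂ^g the Riemann theta function satisfies the addition formula θ(x,τ)·θ(y,τ) = ∑_{ε ∈ {0,1}^g} θ̂[ε](x+y)·θ̂[ε](x−y). -/

import Mathlib

open Complex

/-- The Riemann theta function `θ(·, τ) : ℂ^g → ℂ`. -/
noncomputable def theta {g : ℕ} (τ : Matrix (Fin g) (Fin g) ℂ) (z : Fin g → ℂ) : ℂ :=
  ∑' n : Fin g → ℤ,
    Complex.exp ((Real.pi : ℂ) * Complex.I *
        (∑ i, ∑ j, (n i : ℂ) * τ i j * (n j : ℂ))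
      + 2 * (Real.pi : ℂ) * Complex.I * ∑ i, (n i : ℂ) * z i)

/-- The second-order theta function `θ̂[ε](z)`, i.e. the theta function with
characteristic `[ε; 0]` evaluated at modulus `2τ`. -/
noncomputable def thetaHat {g : ℕ} (τ : Matrix (Fin g) (Fin g) ℂ)
    (ε : Fin g → ℤ) (z : Fin g → ℂ) : ℂ :=
  ∑' n : Fin g → ℤ,
    Complex.exp (2 * (Real.pi : ℂ) * Complex.I *
        (∑ i, ∑ j, ((n i : ℂ) + (ε i : ℂ) / 2) * τ i j * ((n j : ℂ) + (ε j : ℂ) / 2))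
      + 2 * (Real.pi : ℂ) * Complex.I * ∑ i, ((n i : ℂ) + (ε i : ℂ) / 2) * z i)

/-! Write `m = a + b + ε`, `n = a - b` with `ε ∈ {0,1}^g` the parity of `m - n`. For
`u = a + ε/2`, `v = b + ε/2` the parallelogram identity `Q(u+v) + Q(u-v) = 2Q(u) + 2Q(v)` for
`Q(w) = wᵀτw` turns the term `(m, n)` of `θ(x)θ(y)` into the term `(a, b)` of
`θ̂[ε](x+y) θ̂[ε](x-y)`. The rearrangement is justified by absolute convergence: `Im τ ≥ c·I` for
some `c > 0`, so each term of `θ` is bounded by a product of one-variable Jacobi theta terms. -/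

theorem Matrix.parallelogram_sum_sum {ι R : Type*} [Fintype ι] [CommRing R]
    (A : Matrix ι ι R) (u v : ι → R) :
    ∑ i, ∑ j, (u i + v i) * A i j * (u j + v j) + ∑ i, ∑ j, (u i - v i) * A i j * (u j - v j) =
      2 * ∑ i, ∑ j, u i * A i j * u j + 2 * ∑ i, ∑ j, v i * A i j * v j := by
  simp only [Finset.mul_sum, ← Finset.sum_add_distrib]
  exact Finset.sum_congr rfl fun i _ => Finset.sum_congr rfl fun j _ => by ring

def sumDiffParityEquiv (ι : Type*) :
    (ι → Fin 2) × (ι → ℤ) × (ι → ℤ) ≃ (ι → ℤ) × (ι → ℤ) where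
  toFun w := (fun i => w.2.1 i + w.2.2 i + ((w.1 i : ℕ) : ℤ), fun i => w.2.1 i - w.2.2 i)
  invFun mn := (fun i => ⟨((mn.1 i - mn.2 i) % 2).toNat, by omega⟩,
    fun i => (mn.1 i + mn.2 i - (mn.1 i - mn.2 i) % 2) / 2,
    fun i => (mn.1 i - mn.2 i - (mn.1 i - mn.2 i) % 2) / 2)
  left_inv w := by
    refine Prod.ext (funext fun i => Fin.ext ?_)
      (Prod.ext (funext fun i => ?_) (funext fun i => ?_))
    all_goals simp only; have := (w.1 i).isLt; omega
  right_inv mn := by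
    refine Prod.ext (funext fun i => ?_) (funext fun i => ?_) <;> simp only <;> omega

theorem Summable.left_of_prod_mul {α β 𝕜 : Type*} [NormedField 𝕜] [CompleteSpace 𝕜]
    {f : α → 𝕜} {g : β → 𝕜} (h : Summable fun p : α × β => f p.1 * g p.2) {b : β}
    (hb : g b ≠ 0) : Summable f :=
  (summable_mul_right_iff hb).mp (h.prod_symm.prod_factor b)

theorem Summable.right_of_prod_mul {α β 𝕜 : Type*} [NormedField 𝕜] [CompleteSpace 𝕜]
    {f : α → 𝕜} {g : β → 𝕜} (h : Summable fun p : α × β => f p.1 * g p.2) {a : α}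
    (ha : f a ≠ 0) : Summable g :=
  (summable_mul_left_iff ha).mp (h.prod_factor a)

theorem summable_pi_prod_of_nonneg {ι κ : Type*} [Fintype ι] {f : ι → κ → ℝ}
    (hf₀ : ∀ i k, 0 ≤ f i k) (hf : ∀ i, Summable (f i)) :
    Summable fun x : ι → κ => ∏ i, f i (x i) := by
  classical
  refine summable_of_sum_le (c := ∏ i, ∑' k, f i k)
    (fun x => Finset.prod_nonneg fun i _ => hf₀ i (x i)) fun s => ?_
  calc ∑ x ∈ s, ∏ i, f i (x i)
      ≤ ∑ x ∈ Fintype.piFinset fun i => s.image (· i), ∏ i, f i (x i) :=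
        Finset.sum_le_sum_of_subset_of_nonneg
          (fun x hx => Fintype.mem_piFinset.mpr fun i => Finset.mem_image_of_mem _ hx)
          fun x _ _ => Finset.prod_nonneg fun i _ => hf₀ i (x i)
    _ = ∏ i, ∑ k ∈ s.image (· i), f i k := (Finset.prod_univ_sum _ _).symm
    _ ≤ ∏ i, ∑' k, f i k :=
        Finset.prod_le_prod (fun i _ => Finset.sum_nonneg fun k _ => hf₀ i k)
          fun i _ => (hf i).sum_le_tsum _ fun k _ => hf₀ i k

theorem exists_pos_mul_norm_sq_le {E : Type*} [NormedAddCommGroup E] [NormedSpace ℝ E]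
    [FiniteDimensional ℝ E] {q : E → ℝ} (hcont : Continuous q)
    (hhom : ∀ (t : ℝ) (v : E), q (t • v) = t ^ 2 * q v) (hpos : ∀ v, v ≠ 0 → 0 < q v) :
    ∃ c > 0, ∀ v, c * ‖v‖ ^ 2 ≤ q v := by
  have hsphere : ∀ v ∈ Metric.sphere (0 : E) 1, 0 < q v := fun v hv =>
    hpos v (ne_zero_of_mem_unit_sphere ⟨v, hv⟩)
  obtain ⟨C, hC⟩ := (isCompact_sphere (0 : E) 1).exists_bound_of_continuousOn
    (hcont.continuousOn.inv₀ fun v hv => (hsphere v hv).ne')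
  refine ⟨(max C 1)⁻¹, by positivity, fun v => ?_⟩
  rcases eq_or_ne v 0 with rfl | hv
  · simpa using (hhom 0 0).ge
  have hnorm : 0 < ‖v‖ := norm_pos_iff.mpr hv
  have hw : ‖v‖⁻¹ • v ∈ Metric.sphere (0 : E) 1 := by
    simp [norm_smul, hnorm.ne']
  have hqw : (max C 1)⁻¹ ≤ q (‖v‖⁻¹ • v) := by
    have hq := hsphere _ hw
    rw [inv_le_comm₀ (by positivity) hq]
    exact ((le_abs_self _).trans (by simpa using hC _ hw)).trans (le_max_left _ _)
  calc (max C 1)⁻¹ * ‖v‖ ^ 2 ≤ q (‖v‖⁻¹ • v) * ‖v‖ ^ 2 := by gcongr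
    _ = q v := by rw [hhom]; field_simp

theorem Matrix.PosDef.exists_pos_mul_sum_sq_le {ι : Type*} [Fintype ι] {A : Matrix ι ι ℝ}
    (hA : A.PosDef) : ∃ c > 0, ∀ v : ι → ℝ, c * ∑ i, v i ^ 2 ≤ ∑ i, ∑ j, v i * A i j * v j := by
  obtain ⟨c, hc, h⟩ := exists_pos_mul_norm_sq_le (E := EuclideanSpace ℝ ι)
    (q := fun v => ∑ i, ∑ j, v i * A i j * v j) (by fun_prop)
    (fun t v => by
      simp only [PiLp.smul_apply, smul_eq_mul, Finset.mul_sum]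
      exact Finset.sum_congr rfl fun i _ => Finset.sum_congr rfl fun j _ => by ring)
    (fun v hv => by
      simpa [dotProduct, Matrix.mulVec, Finset.mul_sum, mul_assoc, mul_left_comm]
        using hA.dotProduct_mulVec_pos (x := v.ofLp) (by simpa using hv))
  exact ⟨c, hc, fun v => by simpa [EuclideanSpace.norm_sq_eq] using h (WithLp.toLp 2 v)⟩

noncomputable def thetaTerm {g : ℕ} (τ : Matrix (Fin g) (Fin g) ℂ) (z : Fin g → ℂ)
    (n : Fin g → ℤ) : ℂ :=
  Complex.exp ((Real.pi : ℂ) * Complex.I *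
      (∑ i, ∑ j, (n i : ℂ) * τ i j * (n j : ℂ))
    + 2 * (Real.pi : ℂ) * Complex.I * ∑ i, (n i : ℂ) * z i)

noncomputable def thetaHatTerm {g : ℕ} (τ : Matrix (Fin g) (Fin g) ℂ)
    (ε : Fin g → ℤ) (z : Fin g → ℂ) (n : Fin g → ℤ) : ℂ :=
  Complex.exp (2 * (Real.pi : ℂ) * Complex.I *
      (∑ i, ∑ j, ((n i : ℂ) + (ε i : ℂ) / 2) * τ i j * ((n j : ℂ) + (ε j : ℂ) / 2))
    + 2 * (Real.pi : ℂ) * Complex.I * ∑ i, ((n i : ℂ) + (ε i : ℂ) / 2) * z i)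

theorem thetaTerm_mul_thetaTerm {g : ℕ} (τ : Matrix (Fin g) (Fin g) ℂ) (x y : Fin g → ℂ)
    (ε a b : Fin g → ℤ) :
    thetaTerm τ x (a + b + ε) * thetaTerm τ y (a - b) =
      thetaHatTerm τ ε (x + y) a * thetaHatTerm τ ε (x - y) b := by
  set u : Fin g → ℂ := fun i => a i + ε i / 2
  set v : Fin g → ℂ := fun i => b i + ε i / 2
  have hsum : ∀ i, (((a + b + ε) i : ℤ) : ℂ) = u i + v i := fun i => by
    simp only [u, v, Pi.add_apply]; push_cast; ring
  have hdiff : ∀ i, (((a - b) i : ℤ) : ℂ) = u i - v i := fun i => by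
    simp only [u, v, Pi.sub_apply]; push_cast; ring
  have hlin : ∑ i, (u i + v i) * x i + ∑ i, (u i - v i) * y i =
      ∑ i, u i * (x + y) i + ∑ i, v i * (x - y) i := by
    simp only [← Finset.sum_add_distrib, Pi.add_apply, Pi.sub_apply]
    exact Finset.sum_congr rfl fun i _ => by ring
  simp only [thetaTerm, thetaHatTerm, hsum, hdiff, ← Complex.exp_add]
  congr 1
  linear_combination (Real.pi : ℂ) * Complex.I * Matrix.parallelogram_sum_sum τ u v
    + 2 * (Real.pi : ℂ) * Complex.I * hlin

theorem norm_thetaTerm {g : ℕ} (τ : Matrix (Fin g) (Fin g) ℂ) (z : Fin g → ℂ) (n : Fin g → ℤ) :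
    ‖thetaTerm τ z n‖ = Real.exp (-Real.pi * ∑ i, ∑ j, (n i : ℝ) * (τ i j).im * (n j : ℝ)
      - 2 * Real.pi * ∑ i, (n i : ℝ) * (z i).im) := by
  rw [thetaTerm, Complex.norm_exp]
  congr 1
  simp only [Complex.add_re, Complex.mul_re, Complex.mul_im, Complex.I_re, Complex.I_im,
    Complex.ofReal_re, Complex.ofReal_im, Complex.re_sum, Complex.im_sum,
    Complex.intCast_re, Complex.intCast_im, Complex.re_ofNat, Complex.im_ofNat,
    zero_mul, mul_zero, add_zero, zero_add, sub_zero]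
  ring

theorem norm_thetaTerm_le_prod {g : ℕ} (τ : Matrix (Fin g) (Fin g) ℂ) (z : Fin g → ℂ)
    (n : Fin g → ℤ) {c : ℝ}
    (hc : c * ∑ i, (n i : ℝ) ^ 2 ≤ ∑ i, ∑ j, (n i : ℝ) * (τ i j).im * (n j : ℝ)) :
    ‖thetaTerm τ z n‖ ≤ ∏ i, ‖jacobiTheta₂_term (n i) (z i) (Complex.I * c)‖ := by
  have hdiag : ∑ i, -Real.pi * (n i : ℝ) ^ 2 * (Complex.I * c).im =
      -Real.pi * (c * ∑ i, (n i : ℝ) ^ 2) := by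
    simp only [Complex.I_mul_im, Complex.ofReal_re, Finset.mul_sum]
    exact Finset.sum_congr rfl fun i _ => by ring
  have hlin : ∑ i, 2 * Real.pi * (n i : ℝ) * (z i).im =
      2 * Real.pi * ∑ i, (n i : ℝ) * (z i).im := by
    simp only [Finset.mul_sum, mul_assoc]
  rw [norm_thetaTerm]
  simp only [norm_jacobiTheta₂_term, ← Real.exp_sum, Finset.sum_sub_distrib, hdiag, hlin,
    Real.exp_le_exp]
  linarith [mul_le_mul_of_nonneg_left hc Real.pi_pos.le]

theorem summable_norm_thetaTerm {g : ℕ} {τ : Matrix (Fin g) (Fin g) ℂ}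
    (hpos : (Matrix.of fun i j => (τ i j).im).PosDef) (z : Fin g → ℂ) :
    Summable fun n => ‖thetaTerm τ z n‖ := by
  obtain ⟨c, hc, hcoer⟩ := hpos.exists_pos_mul_sum_sq_le
  set h : Fin g → ℤ → ℝ := fun i k => ‖jacobiTheta₂_term k (z i) (Complex.I * c)‖
  have hbound : ∀ n, ‖thetaTerm τ z n‖ ≤ ∏ i, h i (n i) := fun n =>
    norm_thetaTerm_le_prod τ z n (by simpa using hcoer fun i => (n i : ℝ))
  have hfactor : ∀ i, Summable (h i) := fun i => summable_norm_iff.mpr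
    ((summable_jacobiTheta₂_term_iff (z i) (Complex.I * c)).mpr (by simpa using hc))
  exact .of_nonneg_of_le (fun _ => norm_nonneg _) hbound
    (summable_pi_prod_of_nonneg (fun _ _ => norm_nonneg _) hfactor)

theorem theta_addition_formula_general (g : ℕ)
    (τ : Matrix (Fin g) (Fin g) ℂ)
    (hpos : (Matrix.of fun i j => (τ i j).im).PosDef)
    (x y : Fin g → ℂ) :
    theta τ x * theta τ y =
      ∑ ε : Fin g → Fin 2,
        thetaHat τ (fun i => ((ε i : ℕ) : ℤ)) (fun i => x i + y i) *
          thetaHat τ (fun i => ((ε i : ℕ) : ℤ)) (fun i => x i - y i) := by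
  set F : (Fin g → Fin 2) × (Fin g → ℤ) × (Fin g → ℤ) → ℂ := fun w =>
    thetaHatTerm τ (fun i => ((w.1 i : ℕ) : ℤ)) (x + y) w.2.1 *
      thetaHatTerm τ (fun i => ((w.1 i : ℕ) : ℤ)) (x - y) w.2.2
  have hsplit : ∀ w, thetaTerm τ x (sumDiffParityEquiv _ w).1 *
      thetaTerm τ y (sumDiffParityEquiv _ w).2 = F w := fun w =>
    thetaTerm_mul_thetaTerm τ x y _ w.2.1 w.2.2
  have hx := summable_norm_thetaTerm hpos x
  have hy := summable_norm_thetaTerm hpos y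
  have hF : Summable F :=
    ((sumDiffParityEquiv _).summable_iff.mpr (summable_mul_of_summable_norm hx hy)).congr hsplit
  calc theta τ x * theta τ y
      = ∑' mn : (Fin g → ℤ) × (Fin g → ℤ), thetaTerm τ x mn.1 * thetaTerm τ y mn.2 :=
        tsum_mul_tsum_of_summable_norm hx hy
    _ = ∑' w, F w := by rw [← (sumDiffParityEquiv _).tsum_eq]; exact tsum_congr hsplit
    _ = ∑ ε, ∑' ab : (Fin g → ℤ) × (Fin g → ℤ), F (ε, ab) := by
        rw [hF.tsum_prod, tsum_fintype]
    _ = _ := Finset.sum_congr rfl fun ε _ => by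
        have hε : Summable fun ab : (Fin g → ℤ) × (Fin g → ℤ) =>
            thetaHatTerm τ (fun i => ((ε i : ℕ) : ℤ)) (x + y) ab.1 *
              thetaHatTerm τ (fun i => ((ε i : ℕ) : ℤ)) (x - y) ab.2 := hF.prod_factor ε
        exact (Summable.tsum_mul_tsum (hε.left_of_prod_mul (b := 0) (Complex.exp_ne_zero _))
          (hε.right_of_prod_mul (a := 0) (Complex.exp_ne_zero _)) hε).symm

/-- The addition formula for the Riemann theta function:
`θ(x,τ)·θ(y,τ) = ∑_{ε ∈ {0,1}^g} θ̂[ε](x+y)·θ̂[ε](x−y)`. -/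
theorem theta_addition_formula (g : ℕ) (hg : 0 < g)
    (τ : Matrix (Fin g) (Fin g) ℂ) (hsym : τ.IsSymm)
    (hpos : (Matrix.of fun i j => (τ i j).im).PosDef)
    (x y : Fin g → ℂ) :
    theta τ x * theta τ y =
      ∑ ε : Fin g → Fin 2,
        thetaHat τ (fun i => ((ε i : ℕ) : ℤ)) (fun i => x i + y i) *
          thetaHat τ (fun i => ((ε i : ℕ) : ℤ)) (fun i => x i - y i) :=
  theta_addition_formula_general g τ hpos x y
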